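/- Let r > 0 and let B_r = {Z ∈ ℝ² : ‖Z‖ ≤ r} be the closed disk of radius r centered at the origin. For unit vectors E_1, E_2 ∈ ℝ² define G(E_1, E_2) = ∫_{B_r} [ ( exp(⟨Z,E_1⟩)/(exp(⟨Z,E_1⟩)+exp(⟨Z,E_2⟩)) − 1/2 )² + ( exp(⟨Z,E_2⟩)/(exp(⟨Z,E_1⟩)+exp(⟨Z,E_2⟩)) − 1/2 )² ] dZ. Then for any unit vectors E_1, E_2 with ⟨E_1, E_2⟩ ≥ 0 and any orthonormal pair (E'_1, E'_2) of unit vectors in ℝ², G(E_1, E_2) ≤ G(E'_1, E'_2). -/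

import Mathlib

open Real MeasureTheory
open scoped RealInnerProductSpace

/-- The integral over the closed disk of radius `r` of the (un-normalized)
variance of the two-center softmax projection. -/
noncomputable def softmaxVarDisk (r : ℝ)
    (E₁ E₂ : EuclideanSpace ℝ (Fin 2)) : ℝ :=
  ∫ Z in Metric.closedBall (0 : EuclideanSpace ℝ (Fin 2)) r,
    (exp ⟪Z, E₁⟫ / (exp ⟪Z, E₁⟫ + exp ⟪Z, E₂⟫) - 1 / 2) ^ 2 +
      (exp ⟪Z, E₂⟫ / (exp ⟪Z, E₁⟫ + exp ⟪Z, E₂⟫) - 1 / 2) ^ 2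

noncomputable def gfun (t : ℝ) : ℝ :=
  (1 / (1 + exp (-t)) - 1 / 2) ^ 2 + (1 / (1 + exp t) - 1 / 2) ^ 2

lemma gfun_nonneg (t : ℝ) : 0 ≤ gfun t := by unfold gfun; positivity

lemma gfun_neg (t : ℝ) : gfun (-t) = gfun t := by
  simp [gfun, add_comm]

lemma hfun_mono {a b : ℝ} (hab : a ≤ b) :
    1 / (1 + exp (-a)) ≤ 1 / (1 + exp (-b)) := by
  apply one_div_le_one_div_of_le (by positivity)
  have := Real.exp_le_exp.2 (neg_le_neg hab)
  linarith

lemma gfun_mono {a b : ℝ} (ha : 0 ≤ a) (hab : a ≤ b) : gfun a ≤ gfun b := by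
  have h1 : 1 / (1 + exp (-a)) ≤ 1 / (1 + exp (-b)) := hfun_mono hab
  have h2 : 1 / (1 + exp (-(-b))) ≤ 1 / (1 + exp (-(-a))) := hfun_mono (by linarith)
  simp only [neg_neg] at h2
  have ha2 : (1:ℝ) / 2 ≤ 1 / (1 + exp (-a)) := by
    apply one_div_le_one_div_of_le (by positivity)
    have : exp (-a) ≤ 1 := by
      rw [Real.exp_le_one_iff]; linarith
    linarith
  have hb2 : 1 / (1 + exp b) ≤ 1 / 2 := by
    apply one_div_le_one_div_of_le (by norm_num)
    have : (1:ℝ) ≤ exp b := Real.one_le_exp (by linarith)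
    linarith
  have ha2' : 1 / (1 + exp a) ≤ 1 / 2 := by
    apply one_div_le_one_div_of_le (by norm_num)
    have : (1:ℝ) ≤ exp a := Real.one_le_exp (by linarith)
    linarith
  unfold gfun
  have e1 : (1 / (1 + exp (-a)) - 1 / 2) ^ 2 ≤ (1 / (1 + exp (-b)) - 1 / 2) ^ 2 := by
    apply pow_le_pow_left₀ (by linarith) (by linarith)
  have e2 : (1 / (1 + exp a) - 1 / 2) ^ 2 ≤ (1 / (1 + exp b) - 1 / 2) ^ 2 := by
    nlinarith [h2, ha2', hb2]
  linarith

lemma gfun_scale {c t : ℝ} (hc : 1 ≤ c) : gfun t ≤ gfun (c * t) := by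
  rcases le_total 0 t with ht | ht
  · exact gfun_mono ht (by nlinarith)
  · rw [← gfun_neg t, ← gfun_neg (c * t)]
    exact gfun_mono (by linarith) (by nlinarith)

lemma gfun_continuous : Continuous gfun := by
  unfold gfun
  have h : ∀ s : ℝ, (1 : ℝ) + exp s ≠ 0 := fun s => by positivity
  fun_prop (disch := intros; positivity)

lemma integrand_eq (Z E₁ E₂ : EuclideanSpace ℝ (Fin 2)) :
    (exp ⟪Z, E₁⟫ / (exp ⟪Z, E₁⟫ + exp ⟪Z, E₂⟫) - 1 / 2) ^ 2 +
      (exp ⟪Z, E₂⟫ / (exp ⟪Z, E₁⟫ + exp ⟪Z, E₂⟫) - 1 / 2) ^ 2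
      = gfun ⟪Z, E₁ - E₂⟫ := by
  rw [inner_sub_right]
  set a := ⟪Z, E₁⟫
  set b := ⟪Z, E₂⟫
  have ha : exp a > 0 := Real.exp_pos a
  have hb : exp b > 0 := Real.exp_pos b
  unfold gfun
  rw [neg_sub, Real.exp_sub, Real.exp_sub]
  have h1 : exp a + exp b ≠ 0 := by positivity
  have h2 : (1:ℝ) + exp b / exp a ≠ 0 := by positivity
  have h3 : (1:ℝ) + exp a / exp b ≠ 0 := by positivity
  field_simp
  ring

theorem softmaxVarDisk_le_orthonormal (r : ℝ) (hr : 0 < r)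
    (E₁ E₂ E₁' E₂' : EuclideanSpace ℝ (Fin 2))
    (hE₁ : ‖E₁‖ = 1) (hE₂ : ‖E₂‖ = 1) (hE : 0 ≤ ⟪E₁, E₂⟫)
    (hE₁' : ‖E₁'‖ = 1) (hE₂' : ‖E₂'‖ = 1) (hE' : ⟪E₁', E₂'⟫ = 0) :
    softmaxVarDisk r E₁ E₂ ≤ softmaxVarDisk r E₁' E₂' := by
  set B := Metric.closedBall (0 : EuclideanSpace ℝ (Fin 2)) r with hB
  have hrw : ∀ F₁ F₂ : EuclideanSpace ℝ (Fin 2),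
      softmaxVarDisk r F₁ F₂ = ∫ Z in B, gfun ⟪Z, F₁ - F₂⟫ := by
    intro F₁ F₂
    unfold softmaxVarDisk
    simp only [integrand_eq]
    rfl
  rw [hrw, hrw]
  set D := E₁ - E₂ with hD
  set D' := E₁' - E₂' with hD'
  have hd2 : ‖D‖ ^ 2 = 2 - 2 * ⟪E₁, E₂⟫ := by
    rw [hD, norm_sub_sq_real, hE₁, hE₂]; ring
  have hd'2 : ‖D'‖ ^ 2 = 2 := by
    rw [hD', norm_sub_sq_real, hE₁', hE₂', hE']; ring
  have hdle : ‖D‖ ≤ ‖D'‖ := by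
    nlinarith [norm_nonneg D, norm_nonneg D']
  have hint : ∀ v : EuclideanSpace ℝ (Fin 2),
      IntegrableOn (fun Z : EuclideanSpace ℝ (Fin 2) => gfun ⟪Z, v⟫) B volume := by
    intro v
    apply ContinuousOn.integrableOn_compact (isCompact_closedBall _ _)
    exact (gfun_continuous.comp (continuous_id.inner continuous_const)).continuousOn
  rcases eq_or_lt_of_le (norm_nonneg D) with hd0 | hd0
  · -- D = 0, LHS = 0
    have hDz : D = 0 := norm_eq_zero.mp hd0.symm
    have hg0 : gfun 0 = 0 := by norm_num [gfun]
    have : (∫ Z in B, gfun ⟪Z, D⟫) = 0 := by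
      simp [hDz, inner_zero_right, hg0]
    rw [this]
    exact setIntegral_nonneg measurableSet_closedBall fun x _ => gfun_nonneg _
  · set c : ℝ := ‖D'‖ / ‖D‖ with hc
    have hc1 : 1 ≤ c := (one_le_div hd0).mpr hdle
    set y : EuclideanSpace ℝ (Fin 2) := c • D with hy
    have hny : ‖y‖ = ‖D'‖ := by
      rw [hy, norm_smul, Real.norm_eq_abs, abs_of_pos (by linarith), hc]
      field_simp
    set K := (ℝ ∙ (D' - y))ᗮ with hK
    set R := Submodule.reflection K with hR
    have hRD' : R D' = y := Submodule.reflection_sub hny.symm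
    have hadj : ∀ (x w : EuclideanSpace ℝ (Fin 2)), ⟪R x, w⟫ = ⟪x, R w⟫ := by
      intro x w
      conv_lhs => rw [← Submodule.reflection_reflection K w]
      exact LinearIsometryEquiv.inner_map_map R x (R w)
    have hpre : R ⁻¹' B = B := by
      ext z
      simp [hB, Metric.mem_closedBall, dist_zero_right]
    have hcv : (∫ Z in B, gfun ⟪Z, D'⟫) = ∫ Z in B, gfun ⟪Z, y⟫ := by
      have := (R.measurePreserving).setIntegral_preimage_emb
        (R.toHomeomorph.measurableEmbedding)
        (fun Z : EuclideanSpace ℝ (Fin 2) => gfun ⟪Z, D'⟫) B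
      rw [hpre] at this
      rw [← this]
      refine setIntegral_congr_fun measurableSet_closedBall fun x _ => ?_
      rw [hadj, hRD']
    rw [hcv]
    refine setIntegral_mono_on (hint D) (hint y) measurableSet_closedBall
      fun x _ => ?_
    rw [hy, real_inner_smul_right]
    exact gfun_scale hc1
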